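/- Let g_N, g_A : E → E be L-Lipschitz maps on a normed space with ‖g_C(θ)‖ ≤ G for all θ and C ∈ {N, A}, and let r_N, r_A ≥ 0 with r_N + r_A = 1. Define the update θ^{(k+1)} = θ^{(k)} + η·(r_N·g_N(θ^{(k)}) + r_A·g_A(θ^{(k)})). If ‖g_N(θ^{(0)})‖ − ‖g_A(θ^{(0)})‖ ≥ c > 0 for some constant c and η satisfies 2LηG·(k+1) < c for a given k, then ‖g_N(θ^{(j)})‖ > ‖g_A(θ^{(j)})‖ for all j ≤ k+1. -/

import Mathlib

/-! Each step moves `θ` by `η • g_V` with `‖g_V‖ ≤ G` (a convex combination of vectors in the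
ball of radius `G`), and `θ ↦ ‖g_N θ‖ - ‖g_A θ‖` is `2L`-Lipschitz, so the gap shrinks by at most
`2LηG` per step and stays above `c - 2LηG(k+1) > 0` for the first `k + 1` steps. -/

theorem norm_smul_add_smul_le {E : Type*} [NormedAddCommGroup E] [NormedSpace ℝ E]
    {x y : E} {a b G : ℝ} (ha : 0 ≤ a) (hb : 0 ≤ b) (hab : a + b = 1)
    (hx : ‖x‖ ≤ G) (hy : ‖y‖ ≤ G) : ‖a • x + b • y‖ ≤ G := by
  rw [← mem_closedBall_zero_iff] at hx hy ⊢
  exact convex_closedBall 0 G hx hy ha hb hab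

theorem norm_sub_norm_sub_le_of_lipschitz {E F : Type*} [SeminormedAddCommGroup E]
    [SeminormedAddCommGroup F] {f g : E → F} {L : ℝ}
    (hf : ∀ x y, ‖f x - f y‖ ≤ L * ‖x - y‖) (hg : ∀ x y, ‖g x - g y‖ ≤ L * ‖x - y‖) (x y : E) :
    (‖f x‖ - ‖g x‖) - (‖f y‖ - ‖g y‖) ≤ 2 * L * ‖x - y‖ := by
  have hfxy := (norm_sub_norm_le (f x) (f y)).trans (hf x y)
  have hgyx := (norm_sub_norm_le (g y) (g x)).trans (hg y x)
  rw [norm_sub_rev y x] at hgyx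
  linarith

theorem sub_le_mul_of_forall_sub_succ_le {u : ℕ → ℝ} {d : ℝ} (h : ∀ j, u j - u (j + 1) ≤ d)
    (n : ℕ) : u 0 - u n ≤ d * n := by
  induction n with
  | zero => simp
  | succ n ih =>
    push_cast
    linarith [h n]

theorem stmt_5_general {E : Type*} [NormedAddCommGroup E] [NormedSpace ℝ E]
    (gN gA : E → E) (L G : ℝ) (hL : 0 ≤ L)
    (hLipN : ∀ θ₁ θ₂ : E, ‖gN θ₁ - gN θ₂‖ ≤ L * ‖θ₁ - θ₂‖)
    (hLipA : ∀ θ₁ θ₂ : E, ‖gA θ₁ - gA θ₂‖ ≤ L * ‖θ₁ - θ₂‖)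
    (hGN : ∀ θ : E, ‖gN θ‖ ≤ G) (hGA : ∀ θ : E, ‖gA θ‖ ≤ G)
    (rN rA : ℝ) (hN : 0 ≤ rN) (hA : 0 ≤ rA) (hsum : rN + rA = 1)
    (η : ℝ) (hη : 0 < η) (θ : ℕ → E)
    (hupd : ∀ k : ℕ, θ (k + 1) = θ k + η • (rN • gN (θ k) + rA • gA (θ k)))
    (c : ℝ) (hinit : ‖gN (θ 0)‖ - ‖gA (θ 0)‖ ≥ c)
    (k : ℕ) (hstep : 2 * L * η * G * (k + 1) < c) :
    ∀ j ≤ k + 1, ‖gA (θ j)‖ < ‖gN (θ j)‖ := by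
  have hG : 0 ≤ G := (norm_nonneg _).trans (hGN (θ 0))
  have hmove (j : ℕ) : ‖θ (j + 1) - θ j‖ ≤ η * G := by
    rw [hupd j, add_sub_cancel_left, norm_smul, Real.norm_of_nonneg hη.le]
    exact mul_le_mul_of_nonneg_left
      (norm_smul_add_smul_le hN hA hsum (hGN _) (hGA _)) hη.le
  have hgap := sub_le_mul_of_forall_sub_succ_le (u := fun j ↦ ‖gN (θ j)‖ - ‖gA (θ j)‖)
    (d := 2 * L * (η * G)) fun j ↦
      (norm_sub_norm_sub_le_of_lipschitz hLipN hLipA _ _).trans <| by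
        rw [norm_sub_rev]
        exact mul_le_mul_of_nonneg_left (hmove j) (by positivity)
  intro j hj
  have hjk : (j : ℝ) ≤ k + 1 := by exact_mod_cast hj
  have hdrift : 2 * L * (η * G) * j ≤ 2 * L * η * G * (k + 1) := by
    rw [← mul_assoc]
    exact mul_le_mul_of_nonneg_left hjk (by positivity)
  linarith [hgap j]

theorem stmt_5 {E : Type*} [NormedAddCommGroup E] [NormedSpace ℝ E]
    (gN gA : E → E) (L G : ℝ) (hL : 0 ≤ L)
    (hLipN : ∀ θ₁ θ₂ : E, ‖gN θ₁ - gN θ₂‖ ≤ L * ‖θ₁ - θ₂‖)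
    (hLipA : ∀ θ₁ θ₂ : E, ‖gA θ₁ - gA θ₂‖ ≤ L * ‖θ₁ - θ₂‖)
    (hGN : ∀ θ : E, ‖gN θ‖ ≤ G) (hGA : ∀ θ : E, ‖gA θ‖ ≤ G)
    (rN rA : ℝ) (hN : 0 ≤ rN) (hA : 0 ≤ rA) (hsum : rN + rA = 1)
    (η : ℝ) (hη : 0 < η) (θ : ℕ → E)
    (hupd : ∀ k : ℕ, θ (k + 1) = θ k + η • (rN • gN (θ k) + rA • gA (θ k)))
    (c : ℝ) (hc : 0 < c) (hinit : ‖gN (θ 0)‖ - ‖gA (θ 0)‖ ≥ c)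
    (k : ℕ) (hstep : 2 * L * η * G * (k + 1) < c) :
    ∀ j ≤ k + 1, ‖gA (θ j)‖ < ‖gN (θ j)‖ :=
  stmt_5_general gN gA L G hL hLipN hLipA hGN hGA rN rA hN hA hsum η hη θ hupd c hinit k hstep
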